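/- arXiv:1901.08024 — 3 statements merged into one kernel-verified Lean document; each statement's English description precedes it below -/
import Mathlib

section
/- Let φ ∈ L²(ℝ) and V₀ be the L²-closure of the span of integer translates {T^k φ : k ∈ ℤ}. Then f ∈ L²(ℝ) belongs to V₀ if and only if its periodized Fourier transform f̂_*(ω) is collinear to φ̂_*(ω) for almost every ω on the unit circle. -/
/-! The periodized Fourier transform turns translation by `k` into multiplication by
`fourier k`, so it maps the translates of `φ` into the functions that are a.e. pointwise
multiples of `φ̂_*`; this set is a closed subspace (an `L²`-convergent sequence has an a.e.
convergent subsequence), which gives `V₀ ⊆ {f | f̂_* ∥ φ̂_*}`.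
Conversely, if `g ⊥ T^k φ` for all `k`, the integrable function `ω ↦ ⟪ĝ_*(ω), φ̂_*(ω)⟫` has
vanishing Fourier coefficients, hence vanishes a.e. (trigonometric polynomials are dense in
`C(𝕋)`, and integrals against bounded continuous functions determine an integrable function).
So `g ⊥ f` whenever `f̂_*` is pointwise collinear to `φ̂_*`, i.e. such `f` lies in `V₀ᗮᗮ = V₀`. -/

open MeasureTheory
open scoped InnerProductSpace

instance : Fact ((0:ℝ) < 1) := ⟨one_pos⟩

open Filter Topology BoundedContinuousFunction
open scoped NNReal

namespace MeasureTheory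

variable {X : Type*} [TopologicalSpace X] [MeasurableSpace X]

theorem ae_eq_zero_of_forall_integral_smul_eq_zero [HasOuterApproxClosed X]
    [BorelSpace X] {E : Type*} [NormedAddCommGroup E] [NormedSpace ℝ E] [CompleteSpace E]
    {μ : Measure X} {h : X → E} (hh : Integrable h μ)
    (h0 : ∀ u : X →ᵇ ℝ≥0, ∫ x, (u x : ℝ) • h x ∂μ = 0) : h =ᵐ[μ] 0 := by
  refine ae_eq_zero_of_forall_setIntegral_isClosed_eq_zero hh fun s hs => ?_
  have hlim : Tendsto (fun n => ∫ x, (hs.apprSeq n x : ℝ) • h x ∂μ) atTop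
      (𝓝 (∫ x, s.indicator h x ∂μ)) := by
    refine tendsto_integral_of_dominated_convergence (‖h ·‖) (fun n => ?_) hh.norm
      (fun n => ae_of_all _ fun x => ?_) (ae_of_all _ fun x => ?_)
    · exact ((NNReal.continuous_coe.comp (hs.apprSeq n).continuous).aestronglyMeasurable).smul
        hh.aestronglyMeasurable
    · rw [norm_smul, NNReal.norm_eq]
      exact mul_le_of_le_one_left (norm_nonneg _)
        (HasOuterApproxClosed.apprSeq_apply_le_one hs n x)
    · have := ((NNReal.continuous_coe.tendsto _).comp
        (tendsto_pi_nhds.1 (HasOuterApproxClosed.tendsto_apprSeq hs) x)).smul_const (h x)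
      by_cases hx : x ∈ s <;> simpa [hx] using this
  rw [← integral_indicator hs.measurableSet]
  exact tendsto_nhds_unique hlim (by simpa only [h0] using tendsto_const_nhds)

variable [CompactSpace X] [OpensMeasurableSpace X] {μ : Measure X}

theorem Integrable.continuousMap_mul {h : X → ℂ} (hh : Integrable h μ) (u : C(X, ℂ)) :
    Integrable (fun x => u x * h x) μ :=
  hh.bdd_mul u.continuous.aestronglyMeasurable (ae_of_all _ u.norm_coe_le_norm)

noncomputable def integralMulCLM {h : X → ℂ} (hh : Integrable h μ) : C(X, ℂ) →L[ℂ] ℂ :=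
  LinearMap.mkContinuous
    { toFun u := ∫ x, u x * h x ∂μ
      map_add' u v := by
        simp only [ContinuousMap.add_apply, add_mul]
        exact integral_add (hh.continuousMap_mul u) (hh.continuousMap_mul v)
      map_smul' c u := by
        simp only [ContinuousMap.smul_apply, smul_eq_mul, mul_assoc, RingHom.id_apply]
        exact integral_const_mul c _ }
    (∫ x, ‖h x‖ ∂μ) fun u => by
      calc ‖∫ x, u x * h x ∂μ‖ ≤ ∫ x, ‖u‖ * ‖h x‖ ∂μ :=
            norm_integral_le_of_norm_le (hh.norm.const_mul _) (ae_of_all _ fun x => by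
              rw [norm_mul]; gcongr; exact u.norm_coe_le_norm x)
        _ = (∫ x, ‖h x‖ ∂μ) * ‖u‖ := by rw [integral_const_mul, mul_comm]

end MeasureTheory

theorem AddCircle.ae_eq_zero_of_forall_integral_fourier_mul_eq_zero {T : ℝ} [Fact (0 < T)]
    {μ : Measure (AddCircle T)} {h : AddCircle T → ℂ} (hh : Integrable h μ)
    (h0 : ∀ k : ℤ, ∫ x, fourier k x * h x ∂μ = 0) : h =ᵐ[μ] 0 := by
  have hL : integralMulCLM hh = 0 :=
    ContinuousLinearMap.ext_on (Submodule.dense_iff_topologicalClosure_eq_top.2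
      span_fourier_closure_eq_top) (by rintro _ ⟨k, rfl⟩; exact h0 k)
  refine ae_eq_zero_of_forall_integral_smul_eq_zero hh fun u => ?_
  simp only [Complex.real_smul]
  exact congr(($hL) ⟨fun x => ((u x : ℝ) : ℂ), by fun_prop⟩)

theorem ae_apply_zpow_eq_fourier_smul {T : ℝ} [Fact (0 < T)] {μ : Measure (AddCircle T)}
    {H : Type*} [AddCommGroup H] [Module ℂ H] [TopologicalSpace H]
    {E : Type*} [AddCommGroup E] [Module ℂ E] {F : H → AddCircle T → E} {A : H ≃L[ℂ] H}
    (hA : ∀ g, ∀ᵐ x ∂μ, F (A g) x = fourier 1 x • F g x) (k : ℤ) (g : H) :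
    ∀ᵐ x ∂μ, F ((A ^ k) g) x = fourier k x • F g x := by
  have hA_inv : ∀ g, ∀ᵐ x ∂μ, F (A⁻¹ g) x = fourier (-1) x • F g x := fun g => by
    filter_upwards [hA (A⁻¹ g)] with x hx
    rw [show A (A⁻¹ g) = g from congr($(mul_inv_cancel A) g)] at hx
    rw [hx, smul_smul, ← fourier_add, neg_add_cancel, fourier_zero, one_smul]
  have mul_apply (B C : H ≃L[ℂ] H) (g : H) : (B * C) g = B (C g) := rfl
  induction k using Int.induction_on generalizing g with
  | zero => exact ae_of_all _ fun x => by rw [zpow_zero, fourier_zero, one_smul]; rfl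
  | succ i ih =>
    filter_upwards [ih (A g), hA g] with x h₁ h₂
    rw [zpow_add_one, mul_apply, h₁, h₂, smul_smul, ← fourier_add]
  | pred i ih =>
    filter_upwards [ih (A⁻¹ g), hA_inv g] with x h₁ h₂
    rw [zpow_sub_one, mul_apply, h₁, h₂, smul_smul, ← fourier_add, sub_eq_add_neg]

namespace MeasureTheory.Lp

variable {α : Type*} [MeasurableSpace α] {μ : Measure α} {p : ENNReal}
  {𝕜 : Type*} [NormedField 𝕜] {E : Type*} [NormedAddCommGroup E] [NormedSpace 𝕜 E]

def aeMemSubmodule (V : α → Submodule 𝕜 E) : Submodule 𝕜 (Lp E p μ) where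
  carrier := {g | ∀ᵐ a ∂μ, g a ∈ V a}
  add_mem' {f g} hf hg := by
    filter_upwards [hf, hg, Lp.coeFn_add f g] with a hfa hga hfg
    exact hfg ▸ (V a).add_mem hfa hga
  zero_mem' := by
    filter_upwards [Lp.coeFn_zero E p μ] with a h0
    exact h0 ▸ (V a).zero_mem
  smul_mem' c g hg := by
    filter_upwards [hg, Lp.coeFn_smul c g] with a hga hcg
    exact hcg ▸ (V a).smul_mem c hga

theorem isClosed_aeMemSubmodule [Fact (1 ≤ p)] {V : α → Submodule 𝕜 E}
    (hV : ∀ a, IsClosed (V a : Set E)) :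
    IsClosed ((aeMemSubmodule V : Submodule 𝕜 (Lp E p μ)) : Set (Lp E p μ)) := by
  refine IsSeqClosed.isClosed fun g g₀ hg hlim => ?_
  obtain ⟨ns, -, hns⟩ := (tendstoInMeasure_of_tendsto_Lp hlim).exists_seq_tendsto_ae
  filter_upwards [hns, ae_all_iff.2 hg] with a ha hga
  exact (hV a).mem_of_tendsto ha (Eventually.of_forall fun i => hga (ns i))

end MeasureTheory.Lp

section ShiftInvariant

open Submodule

variable {T : ℝ} [Fact (0 < T)] {μ : Measure (AddCircle T)}
  {H : Type*} [NormedAddCommGroup H] [InnerProductSpace ℂ H]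
  {E : Type*} [NormedAddCommGroup E] [InnerProductSpace ℂ E]
  {U : H →ₗᵢ[ℂ] Lp E 2 μ} {A : H ≃L[ℂ] H}

theorem topologicalClosure_span_zpow_le_comap_aeMemSubmodule
    (hUA : ∀ g, ∀ᵐ x ∂μ, U (A g) x = fourier 1 x • U g x) (φ : H) :
    (span ℂ (Set.range fun k : ℤ => (A ^ k) φ)).topologicalClosure ≤
      (Lp.aeMemSubmodule fun x => ℂ ∙ U φ x).comap U.toLinearMap := by
  refine topologicalClosure_minimal _ (span_le.2 ?_)
    ((Lp.isClosed_aeMemSubmodule fun x => closed_of_finiteDimensional _).preimage U.continuous)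
  rintro _ ⟨k, rfl⟩
  filter_upwards [ae_apply_zpow_eq_fourier_smul (F := fun g => U g) hUA k φ] with x hx
  exact hx ▸ smul_mem _ _ (mem_span_singleton_self _)

theorem ae_inner_eq_zero_of_mem_orthogonal_span_zpow
    (hUA : ∀ g, ∀ᵐ x ∂μ, U (A g) x = fourier 1 x • U g x) {φ g : H}
    (hg : g ∈ (span ℂ (Set.range fun k : ℤ => (A ^ k) φ))ᗮ) :
    ∀ᵐ x ∂μ, ⟪U g x, U φ x⟫_ℂ = 0 := by
  refine AddCircle.ae_eq_zero_of_forall_integral_fourier_mul_eq_zero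
    (L2.integrable_inner (U g) (U φ)) fun k => ?_
  have h₀ : ⟪U g, U ((A ^ k) φ)⟫_ℂ = 0 := by
    rw [U.inner_map_map]
    exact (mem_orthogonal' _ g).1 hg _ (subset_span ⟨k, rfl⟩)
  rw [← h₀, L2.inner_def]
  refine integral_congr_ae ?_
  filter_upwards [ae_apply_zpow_eq_fourier_smul (F := fun g => U g) hUA k φ] with x hx
  rw [hx, inner_smul_right]

theorem mem_topologicalClosure_span_zpow_iff [CompleteSpace H]
    (hUA : ∀ g, ∀ᵐ x ∂μ, U (A g) x = fourier 1 x • U g x) (φ f : H) :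
    f ∈ (span ℂ (Set.range fun k : ℤ => (A ^ k) φ)).topologicalClosure ↔
      ∀ᵐ x ∂μ, ∃ c : ℂ, U f x = c • U φ x := by
  simp_rw [eq_comm (a := U f _), ← mem_span_singleton]
  refine ⟨fun hf => topologicalClosure_span_zpow_le_comap_aeMemSubmodule hUA φ hf, fun hf => ?_⟩
  rw [← orthogonal_orthogonal_eq_closure, mem_orthogonal]
  intro g hg
  rw [← U.inner_map_map, L2.inner_def]
  refine integral_eq_zero_of_ae ?_
  filter_upwards [hf, ae_inner_eq_zero_of_mem_orthogonal_span_zpow hUA hg] with x hfx hgx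
  obtain ⟨c, hc⟩ := mem_span_singleton.1 hfx
  rw [Pi.zero_apply, ← hc, inner_smul_right, hgx, mul_zero]

end ShiftInvariant

theorem stmt13_general
    (T : Lp ℂ 2 (volume : Measure ℝ) ≃L[ℂ] Lp ℂ 2 (volume : Measure ℝ))
    (U : Lp ℂ 2 (volume : Measure ℝ) ≃ₗᵢ[ℂ]
        Lp (lp (fun _ : ℤ => ℂ) 2) 2 (volume : Measure (AddCircle (1:ℝ))))
    (hUT : ∀ f : Lp ℂ 2 (volume : Measure ℝ), ∀ᵐ ω : AddCircle (1:ℝ),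
        (U (T f) : AddCircle (1:ℝ) → lp (fun _ : ℤ => ℂ) 2) ω
          = (fourier 1 ω : ℂ) • (U f : AddCircle (1:ℝ) → lp (fun _ : ℤ => ℂ) 2) ω)
    (φ f : Lp ℂ 2 (volume : Measure ℝ)) :
    f ∈ (Submodule.span ℂ (Set.range fun k : ℤ => (T ^ k) φ)).topologicalClosure ↔
      ∀ᵐ ω : AddCircle (1:ℝ), ∃ c : ℂ,
        (U f : AddCircle (1:ℝ) → lp (fun _ : ℤ => ℂ) 2) ω
          = c • (U φ : AddCircle (1:ℝ) → lp (fun _ : ℤ => ℂ) 2) ω :=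
  mem_topologicalClosure_span_zpow_iff (U := U.toLinearIsometry) hUT φ f

/-- Let `φ ∈ L²(ℝ)` and `V₀` be the closure of the span of the integer translates of `φ`.
Then `f ∈ V₀` if and only if its periodized Fourier transform `f̂_*(ω)` is collinear to
`φ̂_*(ω)` for almost every `ω` on the circle.  Here `U = F_*` is the periodized Fourier
transform, the unitary determined by `f ↦ (conj f̂(θ+k))_k` which intertwines translation
with multiplication by `ω`. -/
theorem stmt13
    (T : Lp ℂ 2 (volume : Measure ℝ) ≃L[ℂ] Lp ℂ 2 (volume : Measure ℝ))
    (hT : ∀ f : Lp ℂ 2 (volume : Measure ℝ),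
      ∀ᵐ x : ℝ, (T f : ℝ → ℂ) x = (f : ℝ → ℂ) (x - 1))
    (U : Lp ℂ 2 (volume : Measure ℝ) ≃ₗᵢ[ℂ]
        Lp (lp (fun _ : ℤ => ℂ) 2) 2 (volume : Measure (AddCircle (1:ℝ))))
    (hU : ∀ (f : ℝ → ℂ), Integrable f → ∀ (hf2 : MemLp f 2 (volume : Measure ℝ)) (k : ℤ),
        ∀ᵐ θ : ℝ,
          (U (hf2.toLp f) : AddCircle (1:ℝ) → lp (fun _ : ℤ => ℂ) 2) (θ : AddCircle (1:ℝ)) k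
            = starRingEnd ℂ
                (∫ x : ℝ, f x * Complex.exp (-2 * (Real.pi : ℂ) * Complex.I * (x : ℂ)
                    * ((θ : ℂ) + (k : ℂ)))))
    (hUT : ∀ f : Lp ℂ 2 (volume : Measure ℝ), ∀ᵐ ω : AddCircle (1:ℝ),
        (U (T f) : AddCircle (1:ℝ) → lp (fun _ : ℤ => ℂ) 2) ω
          = (fourier 1 ω : ℂ) • (U f : AddCircle (1:ℝ) → lp (fun _ : ℤ => ℂ) 2) ω)
    (φ f : Lp ℂ 2 (volume : Measure ℝ)) :
    f ∈ (Submodule.span ℂ (Set.range fun k : ℤ => (T ^ k) φ)).topologicalClosure ↔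
      ∀ᵐ ω : AddCircle (1:ℝ), ∃ c : ℂ,
        (U f : AddCircle (1:ℝ) → lp (fun _ : ℤ => ℂ) 2) ω
          = c • (U φ : AddCircle (1:ℝ) → lp (fun _ : ℤ => ℂ) 2) ω :=
  stmt13_general T U hUT φ f
end

section
/- A function f ∈ L²(ℝ) belongs to V₀ = closure of span{T^k φ : k ∈ ℤ} if and only if f̂ = H·φ̂ for some 1-periodic measurable function H : ℝ → ℂ with H·φ̂ ∈ L²(ℝ). -/
/-!
Write `g = φ̂`. Under the Fourier transform `T` becomes multiplication by the character
`θ ↦ e(-θ)` (checked on `L¹ ∩ L²` via the Fourier integral, then extended by density and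
continuity), so `(T^k φ)^ = e(-kθ) g`. Let `μ_g` be the push-forward of `|g|² dθ` to the circle
`ℝ/ℤ`; then `F ↦ (F ∘ π) g` is a linear isometry `L²(μ_g) → L²(ℝ)`, so its range is closed.
Trigonometric polynomials are dense in `L²(μ_g)` because `μ_g` is finite, hence the closed span of
the `(T^k φ)^` is exactly that range: the functions `H g ∈ L²` with `H` measurable and
`1`-periodic.
-/

open MeasureTheory Filter Submodule Set Complex
open scoped ENNReal Real

noncomputable section

lemma mem_topologicalClosure_span_range_iff {R M N ι : Type*} [Semiring R]
    [TopologicalSpace M] [AddCommMonoid M] [Module R M] [ContinuousAdd M] [ContinuousConstSMul R M]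
    [TopologicalSpace N] [AddCommMonoid N] [Module R N] [ContinuousAdd N] [ContinuousConstSMul R N]
    (L : M ≃L[R] N) (v : ι → M) (x : M) :
    x ∈ (span R (range v)).topologicalClosure ↔
      L x ∈ (span R (range fun i => L (v i))).topologicalClosure := by
  have hspan : span R (range fun i => L (v i)) = (span R (range v)).map (L : M →ₗ[R] N) := by
    rw [Submodule.map_span, ← range_comp]
    rfl
  rw [hspan, ← SetLike.mem_coe, ← SetLike.mem_coe, topologicalClosure_coe, topologicalClosure_coe,
    Submodule.map_coe, LinearEquiv.coe_coe, ContinuousLinearEquiv.coe_toLinearEquiv,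
    ← L.image_closure]
  exact L.injective.mem_set_image.symm

lemma isClosed_setOf_ae_eq_mul {X α : Type*} [TopologicalSpace X] [MeasurableSpace α]
    {μ : Measure α} {c : α → ℂ} (hc : MemLp c ∞ μ) {A B : X → Lp ℂ 2 μ}
    (hA : Continuous A) (hB : Continuous B) :
    IsClosed {x | A x =ᵐ[μ] fun a => c a * B x a} := by
  set m := (ContinuousLinearMap.mul ℂ ℂ).holderL μ ∞ 2 2 (hc.toLp c)
  have hm (u : Lp ℂ 2 μ) : m u =ᵐ[μ] fun a => c a * u a := by
    filter_upwards [(ContinuousLinearMap.mul ℂ ℂ).coeFn_holder (r := 2) (hc.toLp c) u,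
      hc.coeFn_toLp] with a h1 h2
    rw [ContinuousLinearMap.holderL_apply_apply, h1, ContinuousLinearMap.mul_apply', h2]
  have hset : {x | A x =ᵐ[μ] fun a => c a * B x a} = {x | A x = m (B x)} :=
    Set.ext fun x => ⟨fun (h : A x =ᵐ[μ] _) => Lp.ext (h.trans (hm _).symm),
      fun (h : A x = m (B x)) => (Lp.ext_iff.1 h).trans (hm _)⟩
  rw [hset]
  exact isClosed_eq hA (m.continuous.comp hB)

lemma integral_comp_sub_mul_cexp (u : ℝ → ℂ) (a y : ℝ) :
    ∫ x, u (x - a) * cexp (-2 * π * I * x * y) =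
      cexp (-2 * π * I * a * y) * ∫ x, u x * cexp (-2 * π * I * x * y) := by
  rw [← integral_const_mul, ← integral_add_right_eq_self _ a]
  congr 1 with x
  rw [add_sub_cancel_right, mul_left_comm, ← Complex.exp_add]
  push_cast
  ring_nf

lemma memLp_top_fourier_coe {P : ℝ} (n : ℤ) :
    MemLp (fun θ : ℝ => fourier n (θ : AddCircle P)) ∞ volume :=
  memLp_top_of_bound (by fun_prop) 1 (ae_of_all _ fun θ => by rw [fourier_apply, Circle.norm_coe])

lemma integrable_coeFn_simpleFunc {α E : Type*} [MeasurableSpace α] [NormedAddCommGroup E]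
    {μ : Measure α} {p : ℝ≥0∞} (hp0 : p ≠ 0) (hp : p ≠ ∞) (s : Lp.simpleFunc E p μ) :
    Integrable (s : α → E) μ :=
  ((SimpleFunc.memLp_iff_integrable hp0 hp).1
    (Lp.simpleFunc.memLp s)).congr (Lp.simpleFunc.toSimpleFunc_eq_toFun s)

namespace PeriodizedL2

variable {P : ℝ}

def periodizedMeasure (g : ℝ → ℂ) : Measure (AddCircle P) :=
  (volume.withDensity fun θ => ‖g θ‖ₑ ^ 2).map (↑)

variable {g : ℝ → ℂ}

lemma eLpNorm_periodizedMeasure (hg : Measurable g) {F : AddCircle P → ℂ} (hF : Measurable F) :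
    eLpNorm F 2 (periodizedMeasure g) = eLpNorm (fun θ : ℝ => F θ * g θ) 2 volume := by
  rw [periodizedMeasure, eLpNorm_map_measure hF.aestronglyMeasurable
    AddCircle.measurable_mk'.aemeasurable]
  simp only [eLpNorm_eq_lintegral_rpow_enorm_toReal two_ne_zero ENNReal.ofNat_ne_top]
  rw [lintegral_withDensity_eq_lintegral_mul _ (by fun_prop) (by fun_prop)]
  congr 1
  refine lintegral_congr fun θ => ?_
  simp [enorm_mul, mul_pow, mul_comm]

lemma memLp_periodizedMeasure_iff (hg : Measurable g) {F : AddCircle P → ℂ} (hF : Measurable F) :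
    MemLp F 2 (periodizedMeasure g) ↔ MemLp (fun θ : ℝ => F θ * g θ) 2 volume := by
  rw [MemLp, MemLp, eLpNorm_periodizedMeasure hg hF]
  exact and_congr (iff_of_true hF.aestronglyMeasurable (by fun_prop)) Iff.rfl

lemma isFiniteMeasure_periodizedMeasure (hg : Measurable g) (hg2 : MemLp g 2 volume) :
    IsFiniteMeasure (periodizedMeasure (P := P) g) := by
  have h1 : MemLp (fun _ => (1 : ℂ)) 2 (periodizedMeasure (P := P) g) :=
    (memLp_periodizedMeasure_iff hg measurable_const).2 (by simpa using hg2)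
  exact ⟨((memLp_const_iff two_ne_zero ENNReal.ofNat_ne_top).1 h1).resolve_left one_ne_zero⟩

lemma mul_ae_eq_of_ae_eq_periodizedMeasure (hg : Measurable g) {F G : AddCircle P → ℂ}
    (h : F =ᵐ[periodizedMeasure g] G) :
    (fun θ : ℝ => F θ * g θ) =ᵐ[volume] fun θ => G θ * g θ := by
  have h' := ae_of_ae_map AddCircle.measurable_mk'.aemeasurable h
  rw [ae_withDensity_iff (by fun_prop)] at h'
  filter_upwards [h'] with θ hθ
  by_cases h0 : g θ = 0
  · simp [h0]
  · rw [hθ (by simpa using h0)]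

def periodizedMul (hg : Measurable g) :
    Lp ℂ 2 (periodizedMeasure (P := P) g) →ₗᵢ[ℂ] Lp ℂ 2 (volume : Measure ℝ) where
  toFun F := ((memLp_periodizedMeasure_iff hg (Lp.stronglyMeasurable F).measurable).1
    (Lp.memLp F)).toLp _
  map_add' F G := by
    rw [← MemLp.toLp_add]
    refine MemLp.toLp_congr _ _ ?_
    filter_upwards [mul_ae_eq_of_ae_eq_periodizedMeasure hg (Lp.coeFn_add F G)] with θ hθ
    rw [Pi.add_apply, hθ, Pi.add_apply, add_mul]
  map_smul' c F := by
    rw [RingHom.id_apply, ← MemLp.toLp_const_smul]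
    refine MemLp.toLp_congr _ _ ?_
    filter_upwards [mul_ae_eq_of_ae_eq_periodizedMeasure hg (Lp.coeFn_smul c F)] with θ hθ
    simp [hθ, mul_assoc]
  norm_map' F := by
    rw [LinearMap.coe_mk, AddHom.coe_mk, Lp.norm_toLp, Lp.norm_def,
      eLpNorm_periodizedMeasure hg (Lp.stronglyMeasurable F).measurable]

lemma coeFn_periodizedMul (hg : Measurable g) (F : Lp ℂ 2 (periodizedMeasure (P := P) g)) :
    periodizedMul hg F =ᵐ[volume] fun θ => F θ * g θ :=
  MemLp.coeFn_toLp ((memLp_periodizedMeasure_iff hg (Lp.stronglyMeasurable F).measurable).1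
    (Lp.memLp F))

lemma periodic_comp_equivIco [Fact (0 < P)] {β : Type*} {H : ℝ → β} (hH : Function.Periodic H P)
    (θ : ℝ) : H (AddCircle.equivIco P 0 θ) = H θ := by
  rw [AddCircle.coe_equivIco_mk_apply, Int.fract, sub_mul, div_mul_cancel₀ θ (Fact.out : 0 < P).ne']
  exact hH.sub_int_mul_eq _

lemma mem_range_periodizedMul_iff [Fact (0 < P)] (hg : Measurable g)
    (h : Lp ℂ 2 (volume : Measure ℝ)) :
    h ∈ LinearMap.range (periodizedMul (P := P) hg).toLinearMap ↔
      ∃ H : ℝ → ℂ, Measurable H ∧ Function.Periodic H P ∧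
        MemLp (fun θ => H θ * g θ) 2 volume ∧ h =ᵐ[volume] fun θ => H θ * g θ := by
  constructor
  · rintro ⟨F, rfl⟩
    refine ⟨fun θ => F θ, (Lp.stronglyMeasurable F).measurable.comp AddCircle.measurable_mk',
      fun θ => by simp only [AddCircle.coe_add_period], ?_, coeFn_periodizedMul hg F⟩
    exact (Lp.memLp _).ae_eq (coeFn_periodizedMul hg F)
  · rintro ⟨H, hH, hper, hH2, hh⟩
    set F : AddCircle P → ℂ := fun z => H (AddCircle.equivIco P 0 z)
    have hF : Measurable F :=
      hH.comp (measurable_subtype_coe.comp (AddCircle.measurableEquivIco P 0).measurable)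
    have hF2 : MemLp F 2 (periodizedMeasure g) := by
      rw [memLp_periodizedMeasure_iff hg hF]
      simpa only [F, periodic_comp_equivIco hper] using hH2
    refine ⟨hF2.toLp F, Lp.ext ?_⟩
    rw [LinearIsometry.coe_toLinearMap]
    filter_upwards [coeFn_periodizedMul hg (hF2.toLp F),
      mul_ae_eq_of_ae_eq_periodizedMeasure hg hF2.coeFn_toLp, hh] with θ h1 h2 h3
    rw [h1, h2, h3, ← periodic_comp_equivIco hper θ]

lemma topologicalClosure_map_span_fourier [Fact (0 < P)] (hg : Measurable g)
    [IsFiniteMeasure (periodizedMeasure (P := P) g)] :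
    ((span ℂ (range (fourier (T := P)))).map ((periodizedMul hg).toLinearMap ∘ₗ
      (ContinuousMap.toLp (E := ℂ) 2 (periodizedMeasure g) ℂ).toLinearMap)).topologicalClosure =
      LinearMap.range (periodizedMul (P := P) hg).toLinearMap := by
  have hdense := (ContinuousMap.toLp_denseRange (p := 2) ℂ (periodizedMeasure (P := P) g) ℂ
    (by norm_num)).topologicalClosure_map_submodule span_fourier_closure_eq_top
  apply SetLike.coe_injective
  rw [Submodule.topologicalClosure_coe, Submodule.map_comp, Submodule.map_coe,
    LinearIsometry.coe_toLinearMap, (periodizedMul hg).isometry.isClosedEmbedding.closure_image_eq,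
    ← Submodule.topologicalClosure_coe, hdense, LinearMap.coe_range, Submodule.top_coe,
    image_univ, LinearIsometry.coe_toLinearMap]

end PeriodizedL2

section Translation

variable (T : Lp ℂ 2 (volume : Measure ℝ) ≃L[ℂ] Lp ℂ 2 (volume : Measure ℝ))
    (hT : ∀ f : Lp ℂ 2 (volume : Measure ℝ),
      ∀ᵐ x : ℝ, (T f : ℝ → ℂ) x = (f : ℝ → ℂ) (x - 1))
    (F2 : Lp ℂ 2 (volume : Measure ℝ) ≃ₗᵢ[ℂ] Lp ℂ 2 (volume : Measure ℝ))
    (hF2 : ∀ (g : ℝ → ℂ), Integrable g → ∀ hg2 : MemLp g 2 (volume : Measure ℝ),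
      (F2 (hg2.toLp g) : ℝ → ℂ) =ᵐ[volume] fun y : ℝ =>
        ∫ x : ℝ, g x * Complex.exp (-2 * (Real.pi : ℂ) * Complex.I * (x : ℂ) * (y : ℂ)))

include hT hF2
open PeriodizedL2

lemma plancherel_translate_of_integrable {u : Lp ℂ 2 (volume : Measure ℝ)}
    (hu : Integrable (u : ℝ → ℂ)) :
    F2 (T u) =ᵐ[volume] fun θ : ℝ => fourier (-1) (θ : AddCircle (1 : ℝ)) * F2 u θ := by
  have hu2 := Lp.memLp u
  have hv2 : MemLp (fun x => u (x - 1)) 2 volume :=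
    hu2.comp_measurePreserving (measurePreserving_sub_right volume 1)
  have hTu' : (T u : ℝ → ℂ) =ᵐ[volume] fun x => u (x - 1) := hT u
  have hTu : T u = hv2.toLp _ := Lp.ext (hTu'.trans hv2.coeFn_toLp.symm)
  have hFTu := hF2 _ (hu.comp_sub_right 1) hv2
  have hFu := hF2 _ hu hu2
  rw [← hTu] at hFTu
  rw [Lp.toLp_coeFn] at hFu
  filter_upwards [hFTu, hFu] with y h1 h2
  rw [h1, h2, integral_comp_sub_mul_cexp, fourier_coe_apply]
  congr 2
  push_cast
  ring

lemma plancherel_translate (u : Lp ℂ 2 (volume : Measure ℝ)) :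
    F2 (T u) =ᵐ[volume] fun θ : ℝ => fourier (-1) (θ : AddCircle (1 : ℝ)) * F2 u θ :=
  (Lp.simpleFunc.denseRange (p := 2) ENNReal.ofNat_ne_top).induction_on u
    (isClosed_setOf_ae_eq_mul (memLp_top_fourier_coe _) (F2.continuous.comp T.continuous)
      F2.continuous)
    fun s => plancherel_translate_of_integrable T hT F2 hF2
      (integrable_coeFn_simpleFunc two_ne_zero ENNReal.ofNat_ne_top s)

lemma plancherel_zpow_translate (k : ℤ) (u : Lp ℂ 2 (volume : Measure ℝ)) :
    F2 ((T ^ k) u) =ᵐ[volume] fun θ : ℝ => fourier (-k) (θ : AddCircle (1 : ℝ)) * F2 u θ := by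
  induction k using Int.induction_on with
  | zero =>
    rw [zpow_zero, neg_zero]
    exact ae_of_all _ fun θ => by simp only [fourier_zero, one_mul]; rfl
  | succ k ih =>
    have hstep : (T ^ ((k : ℤ) + 1)) u = T ((T ^ (k : ℤ)) u) := by
      rw [add_comm, zpow_one_add]; rfl
    rw [hstep]
    filter_upwards [plancherel_translate T hT F2 hF2 ((T ^ (k : ℤ)) u), ih] with θ h1 h2
    rw [h1, h2, ← mul_assoc, ← fourier_add]
    congr 3
    ring
  | pred k ih =>
    have hstep : T ((T ^ (-(k : ℤ) - 1)) u) = (T ^ (-(k : ℤ))) u := by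
      rw [show T ^ (-(k : ℤ)) = T * T ^ (-(k : ℤ) - 1) by rw [← zpow_one_add]; ring_nf]
      rfl
    filter_upwards [plancherel_translate T hT F2 hF2 ((T ^ (-(k : ℤ) - 1)) u), ih] with θ h1 h2
    rw [hstep] at h1
    calc F2 ((T ^ (-(k : ℤ) - 1)) u) θ
        = fourier 1 (θ : AddCircle (1 : ℝ)) * (fourier (-1) (θ : AddCircle (1 : ℝ)) *
            F2 ((T ^ (-(k : ℤ) - 1)) u) θ) := by
          rw [← mul_assoc, ← fourier_add]
          simp
      _ = _ := by
          rw [← h1, h2, ← mul_assoc, ← fourier_add]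
          congr 3
          ring

lemma topologicalClosure_span_plancherel_translates (φ : Lp ℂ 2 (volume : Measure ℝ))
    (hg : Measurable (F2 φ : ℝ → ℂ)) [IsFiniteMeasure (periodizedMeasure (P := 1) (F2 φ))] :
    (span ℂ (range fun k : ℤ => F2 ((T ^ k) φ))).topologicalClosure =
      LinearMap.range (periodizedMul (P := 1) hg).toLinearMap := by
  have : Fact ((0 : ℝ) < 1) := ⟨one_pos⟩
  have hfourier (n : ℤ) : periodizedMul hg (ContinuousMap.toLp (E := ℂ) 2
      (periodizedMeasure (P := 1) (F2 φ)) ℂ (fourier n)) = F2 ((T ^ (-n)) φ) := by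
    refine Lp.ext ?_
    filter_upwards [coeFn_periodizedMul hg _,
      mul_ae_eq_of_ae_eq_periodizedMeasure hg
        (ContinuousMap.coeFn_toLp (p := 2) (𝕜 := ℂ) _ (fourier (T := 1) n)),
      plancherel_zpow_translate T hT F2 hF2 (-n) φ] with θ h1 h2 h3
    rw [h1, h2, h3, neg_neg]
  have hrange : range (fun k : ℤ => F2 ((T ^ k) φ)) = ((periodizedMul hg).toLinearMap ∘ₗ
      (ContinuousMap.toLp (E := ℂ) 2 (periodizedMeasure (P := 1) (F2 φ)) ℂ).toLinearMap) ''
        range fourier := by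
    rw [← neg_surjective.range_comp, ← range_comp]
    exact congrArg range (funext fun n => (hfourier n).symm)
  rw [hrange, ← Submodule.map_span, topologicalClosure_map_span_fourier]

end Translation

/-- A function `f ∈ L²(ℝ)` belongs to `V₀`, the closure of the span of the integer
translates of `φ`, if and only if `f̂ = H·φ̂` for some `1`-periodic measurable function
`H : ℝ → ℂ` with `H·φ̂ ∈ L²(ℝ)`.  Here `F2` is the Fourier–Plancherel transform on `L²(ℝ)`,
characterized on `L¹ ∩ L²` by the Fourier integral. -/
theorem stmt15
    (T : Lp ℂ 2 (volume : Measure ℝ) ≃L[ℂ] Lp ℂ 2 (volume : Measure ℝ))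
    (hT : ∀ f : Lp ℂ 2 (volume : Measure ℝ),
      ∀ᵐ x : ℝ, (T f : ℝ → ℂ) x = (f : ℝ → ℂ) (x - 1))
    (F2 : Lp ℂ 2 (volume : Measure ℝ) ≃ₗᵢ[ℂ] Lp ℂ 2 (volume : Measure ℝ))
    (hF2 : ∀ (g : ℝ → ℂ), Integrable g → ∀ hg2 : MemLp g 2 (volume : Measure ℝ),
      (F2 (hg2.toLp g) : ℝ → ℂ) =ᵐ[volume] fun y : ℝ =>
        ∫ x : ℝ, g x * Complex.exp (-2 * (Real.pi : ℂ) * Complex.I * (x : ℂ) * (y : ℂ)))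
    (φ f : Lp ℂ 2 (volume : Measure ℝ)) :
    f ∈ (Submodule.span ℂ (Set.range fun k : ℤ => (T ^ k) φ)).topologicalClosure ↔
      ∃ Hf : ℝ → ℂ, Measurable Hf ∧ (∀ θ : ℝ, Hf (θ + 1) = Hf θ) ∧
        MemLp (fun θ : ℝ => Hf θ * (F2 φ : ℝ → ℂ) θ) 2 (volume : Measure ℝ) ∧
        (F2 f : ℝ → ℂ) =ᵐ[volume] fun θ : ℝ => Hf θ * (F2 φ : ℝ → ℂ) θ := by
  have : Fact ((0 : ℝ) < 1) := ⟨one_pos⟩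
  have hg : Measurable (F2 φ : ℝ → ℂ) := (Lp.stronglyMeasurable _).measurable
  have := PeriodizedL2.isFiniteMeasure_periodizedMeasure (P := 1) hg (Lp.memLp _)
  rw [mem_topologicalClosure_span_range_iff F2.toContinuousLinearEquiv,
    LinearIsometryEquiv.coe_toContinuousLinearEquiv,
    topologicalClosure_span_plancherel_translates T hT F2 hF2 φ hg,
    PeriodizedL2.mem_range_periodizedMul_iff]
  rfl
end
end

section
/- Let φ ∈ L²(ℝ) be refinable with V_j = D^j V₀ as above. Then the closure of ⋃_j V_j equals L²(ℝ) if and only if ⋃_{j∈ℤ} 2^j · supp(φ̂) = ℝ up to a null set, where 2^j S = {2^j θ : θ ∈ S}. -/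
/-!
Write `V₀` for the closed span of the translates `T^k φ` and `W` for the closure of `⋃ D^j V₀`.
On the Fourier side `T^k` becomes modulation by `exp(-2πikθ)` and `D` becomes `D⁻¹`. Since
`D⁻¹ T D = T²`, refinability gives `D⁻¹ V₀ ⊆ V₀`, so `D^(j+m) T^k D^(-m) φ ∈ W` for all `m ≥ 0`,
and the Fourier transform of this element is `D^(-j) φ̂` modulated by the frequency `k 2^(-(j+m))`.
Hence `f ⊥ W` forces the `L¹` function `conj f̂ · D^(-j) φ̂` to have a Fourier transform vanishing
on the dense set of dyadic rationals, hence everywhere, so `f̂ = 0` a.e. on `⋃_j 2^j supp φ̂`;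
conversely any `f̂` supported off that union is orthogonal to `W`. So `W^⊥ = 0` exactly when the
union is conull.
-/

open MeasureTheory FourierTransform Complex ComplexConjugate Real Submodule Set
open scoped SchwartzMap

local notation "L²" => Lp ℂ 2 (volume : Measure ℝ)

namespace ContinuousLinearEquiv

variable {R M : Type*} [Semiring R] [TopologicalSpace M] [AddCommMonoid M] [Module R M]

@[simp] lemma one_apply (x : M) : (1 : M ≃L[R] M) x = x := rfl

@[simp] lemma mul_apply (e e' : M ≃L[R] M) (x : M) : (e * e') x = e (e' x) := rfl

@[simp] lemma apply_inv_apply (e : M ≃L[R] M) (x : M) : e (e⁻¹ x) = x := e.apply_symm_apply x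

end ContinuousLinearEquiv

section ClosedSpans

variable {R M N ι : Type*} [Ring R] [TopologicalSpace M] [AddCommGroup M] [Module R M]
  [IsTopologicalAddGroup M] [ContinuousConstSMul R M]
  [TopologicalSpace N] [AddCommGroup N] [Module R N]

lemma topologicalClosure_span_range_le_comap (A : M →L[R] N) {v : ι → M} {K : Submodule R N}
    (hK : IsClosed (K : Set N)) (h : ∀ i, A (v i) ∈ K) :
    (span R (range v)).topologicalClosure ≤ K.comap (A : M →ₗ[R] N) :=
  topologicalClosure_minimal _ (span_le.mpr (range_subset_iff.mpr h)) (hK.preimage A.continuous)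

def closedShiftSpan (T : M ≃L[R] M) (φ : M) : Submodule R M :=
  (span R (range fun k : ℤ => (T ^ k) φ)).topologicalClosure

def closedMultiscaleSpan (T D : M ≃L[R] M) (φ : M) : Submodule R M :=
  (⨆ j : ℤ, map (((D ^ j : M ≃L[R] M) : M →L[R] M) : M →ₗ[R] M) (closedShiftSpan T φ)
    ).topologicalClosure

variable {T D : M ≃L[R] M} {φ v : M}

lemma self_mem_closedShiftSpan : φ ∈ closedShiftSpan T φ :=
  le_topologicalClosure _ (subset_span ⟨0, by simp⟩)

lemma zpow_apply_mem_closedShiftSpan (k : ℤ) (hv : v ∈ closedShiftSpan T φ) :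
    (T ^ k) v ∈ closedShiftSpan T φ := by
  refine topologicalClosure_span_range_le_comap ((T ^ k : M ≃L[R] M) : M →L[R] M)
    (isClosed_topologicalClosure _) (fun i => ?_) hv
  rw [ContinuousLinearEquiv.coe_coe, ← ContinuousLinearEquiv.mul_apply, ← zpow_add]
  exact le_topologicalClosure _ (subset_span ⟨k + i, rfl⟩)

lemma inv_apply_mem_closedShiftSpan (hTD : T * D = D * T ^ 2)
    (href : D⁻¹ φ ∈ closedShiftSpan T φ) (hv : v ∈ closedShiftSpan T φ) :
    D⁻¹ v ∈ closedShiftSpan T φ := by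
  have hcomm (k : ℤ) : D⁻¹ * T ^ k = T ^ (2 * k) * D⁻¹ := by
    rw [zpow_mul]
    exact ((SemiconjBy.zpow_right hTD.symm k).inv_symm_left)
  refine topologicalClosure_span_range_le_comap ((D⁻¹ : M ≃L[R] M) : M →L[R] M)
    (isClosed_topologicalClosure _) (fun k => ?_) hv
  rw [ContinuousLinearEquiv.coe_coe, ← ContinuousLinearEquiv.mul_apply, hcomm,
    ContinuousLinearEquiv.mul_apply]
  exact zpow_apply_mem_closedShiftSpan _ href

lemma zpow_neg_natCast_apply_mem_closedShiftSpan (hTD : T * D = D * T ^ 2)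
    (href : D⁻¹ φ ∈ closedShiftSpan T φ) (m : ℕ) (hv : v ∈ closedShiftSpan T φ) :
    (D ^ (-(m : ℤ))) v ∈ closedShiftSpan T φ := by
  induction m generalizing v with
  | zero => simpa using hv
  | succ m ih =>
    rw [Nat.cast_succ, neg_add, zpow_add, zpow_neg_one, ContinuousLinearEquiv.mul_apply]
    exact ih (inv_apply_mem_closedShiftSpan hTD href hv)

lemma zpow_apply_mem_closedMultiscaleSpan (j : ℤ) (hv : v ∈ closedShiftSpan T φ) :
    (D ^ j) v ∈ closedMultiscaleSpan T D φ :=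
  le_topologicalClosure _ (mem_iSup_of_mem j ⟨v, hv, rfl⟩)

lemma closedMultiscaleSpan_le {K : Submodule R M} (hK : IsClosed (K : Set M))
    (h : ∀ j k : ℤ, (D ^ j) ((T ^ k) φ) ∈ K) : closedMultiscaleSpan T D φ ≤ K :=
  topologicalClosure_minimal _ (iSup_le fun j => map_le_iff_le_comap.mpr
    (topologicalClosure_span_range_le_comap ((D ^ j : M ≃L[R] M) : M →L[R] M) hK (h j))) hK

end ClosedSpans

lemma dense_intCast_mul_two_zpow (j : ℤ) :
    Dense {t : ℝ | ∃ (k : ℤ) (m : ℕ), t = k * 2 ^ (-(j + m))} := by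
  refine dense_of_exists_between fun a b hab => ?_
  obtain ⟨m, hm⟩ := exists_pow_lt_of_lt_one (mul_pos (sub_pos.mpr hab) (zpow_pos two_pos j))
    (by norm_num : (2 : ℝ)⁻¹ < 1)
  set N : ℝ := 2 ^ (j + m) with hN
  have hN0 : 0 < N := zpow_pos two_pos _
  have hNb : N⁻¹ < b - a := by
    rw [hN, zpow_add₀ two_ne_zero, mul_inv, zpow_natCast, ← inv_pow]
    calc (2 ^ j)⁻¹ * (2 : ℝ)⁻¹ ^ m < (2 ^ j)⁻¹ * ((b - a) * 2 ^ j) := by gcongr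
      _ = b - a := by field_simp
  refine ⟨(⌊a * N⌋ + 1 : ℤ) * N⁻¹, ⟨_, m, by rw [zpow_neg]⟩, ?_, ?_⟩
  · rw [← div_eq_mul_inv, lt_div_iff₀ hN0]
    push_cast
    exact Int.lt_floor_add_one _
  · have hfloor := Int.floor_le (a * N)
    calc ((⌊a * N⌋ + 1 : ℤ) : ℝ) * N⁻¹ = ⌊a * N⌋ * N⁻¹ + N⁻¹ := by push_cast; ring
      _ ≤ a * N * N⁻¹ + N⁻¹ := by gcongr
      _ < b := by rw [mul_inv_cancel_right₀ hN0.ne']; linarith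

lemma MeasureTheory.Lp.forall_eq_zero_of_ae_eq_zero_off_iff {α E : Type*} [MeasurableSpace α]
    {μ : Measure α} [SigmaFinite μ] [NormedAddCommGroup E] [Nontrivial E] {p : ENNReal} (hp0 : p ≠ 0)
    (hp : p ≠ ⊤) {Z : Set α} (hZ : MeasurableSet Z) :
    (∀ g : Lp E p μ, (∀ᵐ x ∂μ, g x = 0 ∨ x ∈ Z) → g = 0) ↔ μ Z = 0 := by
  refine ⟨fun h => ?_, fun hZ0 g hg => ?_⟩
  · by_contra hZpos
    obtain ⟨S, hS, hSZ, hSpos, hSfin⟩ :=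
      Measure.exists_subset_measure_lt_top hZ (pos_iff_ne_zero.mpr hZpos)
    obtain ⟨c, hc⟩ := exists_ne (0 : E)
    have h0 := h (indicatorConstLp p hS hSfin.ne c) (by
      filter_upwards [indicatorConstLp_coeFn (p := p) (hs := hS) (hμs := hSfin.ne) (c := c)]
        with x hx
      by_cases hxS : x ∈ S
      · exact Or.inr (hSZ hxS)
      · exact Or.inl (by rw [hx, Set.indicator_of_notMem hxS]))
    have hnorm := congrArg norm h0
    rw [norm_indicatorConstLp hp0 hp, Lp.norm_zero] at hnorm
    have hSreal : 0 < μ.real S := ENNReal.toReal_pos hSpos.ne' hSfin.ne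
    exact (mul_pos (norm_pos_iff.mpr hc) (Real.rpow_pos_of_pos hSreal _)).ne' hnorm
  · rw [Lp.eq_zero_iff_ae_eq_zero]
    filter_upwards [hg, measure_eq_zero_iff_ae_notMem.mp hZ0] with x h1 h2
    exact h1.resolve_right h2

namespace Real

lemma ae_comp_mul_left {a : ℝ} (ha : a ≠ 0) {p : ℝ → Prop} (h : ∀ᵐ x, p x) :
    ∀ᵐ x, p (a * x) :=
  (Measure.quasiMeasurePreserving_smul volume ha).ae h

lemma ae_comp_sub_right (b : ℝ) {p : ℝ → Prop} (h : ∀ᵐ x, p x) : ∀ᵐ x, p (x - b) :=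
  (measurePreserving_sub_right volume b).quasiMeasurePreserving.ae h

lemma fourier_const_mul (c : ℂ) (g : ℝ → ℂ) (y : ℝ) :
    𝓕 (fun x => c * g x) y = c * 𝓕 g y := by
  simp_rw [Real.fourier_real_eq_integral_exp_smul, smul_eq_mul, ← integral_const_mul]
  congr 1 with x
  ring

lemma fourier_comp_sub_right (g : ℝ → ℂ) (b y : ℝ) :
    𝓕 (fun x => g (x - b)) y = cexp (↑(-2 * π * y * b) * I) * 𝓕 g y := by
  simp_rw [Real.fourier_real_eq_integral_exp_smul, smul_eq_mul, ← integral_const_mul]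
  rw [← integral_add_right_eq_self _ b]
  congr 1 with x
  rw [add_sub_cancel_right, ← mul_assoc, ← Complex.exp_add]
  push_cast
  ring_nf

lemma fourier_comp_mul_left (g : ℝ → ℂ) {a : ℝ} (ha : a ≠ 0) (y : ℝ) :
    𝓕 (fun x => g (a * x)) y = |a|⁻¹ • 𝓕 g (a⁻¹ * y) := by
  rw [Real.fourier_real_eq_integral_exp_smul, Real.fourier_real_eq_integral_exp_smul, ← abs_inv,
    ← Measure.integral_comp_mul_left _ a]
  congr! 5 with x
  field_simp

lemma fourier_eq_integral_mul_exp (g : ℝ → ℂ) (y : ℝ) :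
    𝓕 g y = ∫ x, g x * cexp (-2 * π * I * x * y) := by
  rw [Real.fourier_real_eq_integral_exp_smul]
  congr 1 with x
  rw [smul_eq_mul, mul_comm]
  push_cast
  ring_nf

end Real

section FourierUniqueness

variable {V F : Type*} [NormedAddCommGroup V] [InnerProductSpace ℝ V] [FiniteDimensional ℝ V]
  [MeasurableSpace V] [BorelSpace V] [NormedAddCommGroup F] [NormedSpace ℂ F] [CompleteSpace F]

lemma MeasureTheory.Integrable.ae_eq_zero_of_fourier_eq_zero {h : V → F} (hh : Integrable h)
    (h0 : 𝓕 h = 0) : h =ᵐ[volume] 0 := by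
  refine ae_eq_zero_of_integral_contDiff_smul_eq_zero hh.locallyIntegrable fun g hg hgc => ?_
  let ψ : 𝓢(V, ℂ) := 𝓕⁻ ((hgc.comp_left Complex.ofReal_zero).toSchwartzMap
    (Complex.ofRealCLM.contDiff.comp hg))
  have hψ : 𝓕 (ψ : V → ℂ) = fun x => (g x : ℂ) := by
    rw [← SchwartzMap.fourier_coe, FourierInvPair.fourier_fourierInv_eq]
    rfl
  calc ∫ x, g x • h x = ∫ x, 𝓕 (ψ : V → ℂ) x • h x := by
        simp_rw [hψ, Complex.coe_smul]
    _ = ∫ ξ, ψ ξ • 𝓕 h ξ := by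
        have := VectorFourier.integral_fourierIntegral_smul_eq_flip (L := innerₗ V) (μ := volume)
          Real.continuous_fourierChar continuous_inner ψ.integrable hh
        rwa [flip_innerₗ] at this
    _ = 0 := by simp [h0]

end FourierUniqueness

section Dilation

variable {E : L² ≃L[ℂ] L²} {c : ℂ} {a : ℝ}

lemma dilation_inv_apply (hc : c ≠ 0) (ha : a ≠ 0)
    (hE : ∀ f : L², ∀ᵐ x, E f x = c * f (a * x)) (f : L²) :
    ∀ᵐ x, (E⁻¹ f : L²) x = c⁻¹ * f (a⁻¹ * x) := by
  filter_upwards [ae_comp_mul_left (inv_ne_zero ha) (hE (E⁻¹ f))] with x hx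
  rw [mul_inv_cancel_left₀ ha, E.apply_inv_apply] at hx
  rw [hx, inv_mul_cancel_left₀ hc]

lemma dilation_zpow_apply (hc : c ≠ 0) (ha : a ≠ 0)
    (hE : ∀ f : L², ∀ᵐ x, E f x = c * f (a * x)) (j : ℤ) (f : L²) :
    ∀ᵐ x, (E ^ j) f x = c ^ j * f (a ^ j * x) := by
  induction j using Int.induction_on generalizing f with
  | zero => simp
  | succ i ih =>
    filter_upwards [ih (E f), ae_comp_mul_left (zpow_ne_zero i ha) (hE f)] with x h1 h2
    rw [zpow_add_one, ContinuousLinearEquiv.mul_apply, h1, h2, zpow_add_one₀ hc,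
      zpow_add_one₀ ha]
    ring_nf
  | pred i ih =>
    filter_upwards [ih (E⁻¹ f),
      ae_comp_mul_left (zpow_ne_zero (-(i : ℤ)) ha) (dilation_inv_apply hc ha hE f)] with x h1 h2
    rw [zpow_sub_one, ContinuousLinearEquiv.mul_apply, h1, h2, zpow_sub_one₀ hc,
      zpow_sub_one₀ ha]
    ring_nf

end Dilation

lemma memLp_top_exp_mul_I (t : ℝ) :
    MemLp (fun θ : ℝ => cexp (↑(-2 * π * θ * t) * I)) ⊤ volume :=
  memLp_top_of_bound (by fun_prop) 1 (ae_of_all _ fun θ => (norm_exp_ofReal_mul_I _).le)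

noncomputable def modulation (t : ℝ) : L² →L[ℂ] L² :=
  (ContinuousLinearMap.mul ℂ ℂ).holderL volume ⊤ 2 2 ((memLp_top_exp_mul_I t).toLp _)

lemma coeFn_modulation (t : ℝ) (h : L²) :
    modulation t h =ᵐ[volume] fun θ => cexp (↑(-2 * π * θ * t) * I) * h θ := by
  filter_upwards [ContinuousLinearMap.coeFn_holder (r := 2) (ContinuousLinearMap.mul ℂ ℂ)
    ((memLp_top_exp_mul_I t).toLp _) h, (memLp_top_exp_mul_I t).coeFn_toLp] with θ h1 h2
  rw [← h2]
  exact h1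

lemma modulation_zero (h : L²) : modulation 0 h = h := by
  refine Lp.ext ?_
  filter_upwards [coeFn_modulation 0 h] with θ hθ
  simp [hθ]

lemma modulation_add (s t : ℝ) (h : L²) :
    modulation (s + t) h = modulation s (modulation t h) := by
  refine Lp.ext ?_
  filter_upwards [coeFn_modulation (s + t) h, coeFn_modulation s (modulation t h),
    coeFn_modulation t h] with θ h1 h2 h3
  rw [h1, h2, h3, ← mul_assoc, ← Complex.exp_add]
  push_cast
  ring_nf

lemma inner_modulation (g h : L²) (t : ℝ) :
    inner ℂ g (modulation t h) = 𝓕 (fun θ => conj (g θ) * h θ) t := by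
  rw [L2.inner_def, Real.fourier_real_eq_integral_exp_smul]
  refine integral_congr_ae ?_
  filter_upwards [coeFn_modulation t h] with θ hθ
  rw [hθ, RCLike.inner_apply, smul_eq_mul]
  ring

lemma translation_mul_dilation {T D : L² ≃L[ℂ] L²} {c : ℂ}
    (hT : ∀ f : L², ∀ᵐ x, T f x = f (x - 1)) (hD : ∀ f : L², ∀ᵐ x, D f x = c * f (2 * x)) :
    T * D = D * T ^ 2 := by
  refine ContinuousLinearEquiv.ext (funext fun f => Lp.ext ?_)
  filter_upwards [hT (D f), ae_comp_sub_right 1 (hD f), hD (T (T f)),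
    ae_comp_mul_left two_ne_zero (hT (T f)),
    ae_comp_mul_left two_ne_zero (ae_comp_sub_right 1 (hT f))] with x h1 h2 h3 h4 h5
  simp only [ContinuousLinearEquiv.mul_apply, pow_two]
  rw [h1, h2, h3, h4, h5]
  ring_nf

lemma dilation_zpow_modulation {E : L² ≃L[ℂ] L²} {c : ℂ} {a : ℝ} (hc : c ≠ 0) (ha : a ≠ 0)
    (hE : ∀ f : L², ∀ᵐ x, E f x = c * f (a * x)) (j : ℤ) (t : ℝ) (h : L²) :
    (E ^ j) (modulation t h) = modulation (t * a ^ j) ((E ^ j) h) := by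
  refine Lp.ext ?_
  filter_upwards [dilation_zpow_apply hc ha hE j (modulation t h),
    ae_comp_mul_left (zpow_ne_zero j ha) (coeFn_modulation t h),
    coeFn_modulation (t * a ^ j) ((E ^ j) h), dilation_zpow_apply hc ha hE j h]
    with x h1 h2 h3 h4
  rw [h1, h2, h3, h4]
  push_cast
  ring_nf

lemma eq_of_eq_on_integrable {A B : L² → L²} (hA : Continuous A) (hB : Continuous B)
    (h : ∀ (g : ℝ → ℂ) (hg : Integrable g) (hg2 : MemLp g 2), A (hg2.toLp g) = B (hg2.toLp g)) :
    A = B :=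
  (SchwartzMap.denseRange_toLpCLM (F := ℂ) (p := 2) ENNReal.ofNat_ne_top).equalizer hA hB
    (funext fun f => h f f.integrable (f.memLp 2))

section FourierPlancherel

variable {F : L² ≃ₗᵢ[ℂ] L²}
  (hF : ∀ g : ℝ → ℂ, Integrable g → ∀ hg : MemLp g 2, F (hg.toLp g) =ᵐ[volume] 𝓕 g)
include hF

lemma fourier_ae_eq_of_ae_eq {u : L²} {g : ℝ → ℂ} (hg : Integrable g) (hu : u =ᵐ[volume] g) :
    F u =ᵐ[volume] 𝓕 g := by
  have hg2 : MemLp g 2 := (Lp.memLp u).ae_eq hu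
  rw [show u = hg2.toLp g from Lp.ext (hu.trans hg2.coeFn_toLp.symm)]
  exact hF g hg hg2

lemma apply_translation_eq {E : L² ≃L[ℂ] L²} {b : ℝ}
    (hE : ∀ f : L², ∀ᵐ x, E f x = f (x - b)) (f : L²) :
    F (E f) = modulation b (F f) := by
  refine congrFun (eq_of_eq_on_integrable (F.continuous.comp E.continuous)
    ((modulation b).continuous.comp F.continuous) fun g hg hg2 => Lp.ext ?_) f
  have hEg : E (hg2.toLp g) =ᵐ[volume] fun x => g (x - b) := by
    filter_upwards [hE (hg2.toLp g), ae_comp_sub_right b hg2.coeFn_toLp] with x h1 h2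
    rw [h1, h2]
  filter_upwards [fourier_ae_eq_of_ae_eq hF (hg.comp_sub_right b) hEg,
    coeFn_modulation b (F (hg2.toLp g)), hF g hg hg2] with y h1 h2 h3
  rw [Function.comp_apply, Function.comp_apply, h1, h2, h3, fourier_comp_sub_right]

lemma apply_dilation_eq {E : L² ≃L[ℂ] L²} {a : ℝ} (ha : 0 < a)
    (hE : ∀ f : L², ∀ᵐ x, E f x = Real.sqrt a * f (a * x)) (f : L²) :
    F (E f) = E⁻¹ (F f) := by
  refine congrFun (eq_of_eq_on_integrable (F.continuous.comp E.continuous)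
    ((E⁻¹ : L² ≃L[ℂ] L²).continuous.comp F.continuous) fun g hg hg2 => Lp.ext ?_) f
  have hsqrt : (Real.sqrt a : ℂ) ≠ 0 := by exact_mod_cast (Real.sqrt_pos.mpr ha).ne'
  have hEg : E (hg2.toLp g) =ᵐ[volume] fun x => Real.sqrt a * g (a * x) := by
    filter_upwards [hE (hg2.toLp g), ae_comp_mul_left ha.ne' hg2.coeFn_toLp] with x h1 h2
    rw [h1, h2]
  filter_upwards [fourier_ae_eq_of_ae_eq hF ((hg.comp_mul_left' ha.ne').const_mul _) hEg,
    dilation_inv_apply hsqrt ha.ne' hE (F (hg2.toLp g)),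
    ae_comp_mul_left (inv_ne_zero ha.ne') (hF g hg hg2)] with y h1 h2 h3
  rw [Function.comp_apply, Function.comp_apply, h1, h2, h3]
  have hsq : ((Real.sqrt a : ℝ) : ℂ) ^ 2 = a := by exact_mod_cast Real.sq_sqrt ha.le
  rw [fourier_const_mul, fourier_comp_mul_left _ ha.ne', abs_of_pos ha, Complex.real_smul,
    ← mul_assoc, Complex.ofReal_inv, ← hsq]
  field_simp

lemma apply_zpow_translation_eq {E : L² ≃L[ℂ] L²} {b : ℝ}
    (hE : ∀ f : L², ∀ᵐ x, E f x = f (x - b)) (k : ℤ) (f : L²) :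
    F ((E ^ k) f) = modulation (k * b) (F f) := by
  induction k using Int.induction_on generalizing f with
  | zero => simp [modulation_zero]
  | succ i ih =>
    rw [zpow_add_one, ContinuousLinearEquiv.mul_apply, ih, apply_translation_eq hF hE,
      ← modulation_add]
    push_cast
    ring_nf
  | pred i ih =>
    have hinv : F (E⁻¹ f) = modulation (-b) (F f) := by
      rw [← modulation_zero (F (E⁻¹ f)), ← neg_add_cancel b, modulation_add,
        ← apply_translation_eq hF hE, E.apply_inv_apply]
    rw [zpow_sub_one, ContinuousLinearEquiv.mul_apply, ih, hinv, ← modulation_add]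
    push_cast
    ring_nf

lemma apply_zpow_dilation_eq {E : L² ≃L[ℂ] L²} {a : ℝ} (ha : 0 < a)
    (hE : ∀ f : L², ∀ᵐ x, E f x = Real.sqrt a * f (a * x)) (j : ℤ) (f : L²) :
    F ((E ^ j) f) = (E ^ (-j)) (F f) := by
  have h : SemiconjBy F.toContinuousLinearEquiv E E⁻¹ :=
    ContinuousLinearEquiv.ext (funext (apply_dilation_eq hF ha hE))
  rw [zpow_neg, ← inv_zpow]
  exact congrArg (· f) (h.zpow_right j)

end FourierPlancherel

lemma ofReal_sqrt_two_ne_zero : (Real.sqrt 2 : ℂ) ≠ 0 := by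
  exact_mod_cast (Real.sqrt_pos.mpr two_pos).ne'

section Refinable

variable {T D : L² ≃L[ℂ] L²} {F : L² ≃ₗᵢ[ℂ] L²} {φ : L²}
  (hT : ∀ f : L², ∀ᵐ x, T f x = f (x - 1))
  (hD : ∀ f : L², ∀ᵐ x, D f x = Real.sqrt 2 * f (2 * x))
  (hF : ∀ g : ℝ → ℂ, Integrable g → ∀ hg : MemLp g 2, F (hg.toLp g) =ᵐ[volume] 𝓕 g)
include hT hD hF

lemma fourier_generator (j m k : ℤ) :
    F ((D ^ (j + m)) ((T ^ k) ((D ^ (-m)) φ))) =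
      modulation (k * 2 ^ (-(j + m))) ((D ^ (-j)) (F φ)) := by
  rw [apply_zpow_dilation_eq hF two_pos hD, apply_zpow_translation_eq hF hT,
    apply_zpow_dilation_eq hF two_pos hD,
    dilation_zpow_modulation ofReal_sqrt_two_ne_zero two_ne_zero hD,
    ← ContinuousLinearEquiv.mul_apply, ← zpow_add, mul_one, neg_neg,
    show -(j + m) + m = -j by ring]

lemma inner_generator (f : L²) (j m k : ℤ) :
    inner ℂ f ((D ^ (j + m)) ((T ^ k) ((D ^ (-m)) φ))) =
      𝓕 (fun θ => conj (F f θ) * (D ^ (-j)) (F φ) θ) (k * 2 ^ (-(j + m))) := by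
  rw [← F.inner_map_map, fourier_generator hT hD hF, inner_modulation]

lemma mem_orthogonal_closedMultiscaleSpan_iff (href : D⁻¹ φ ∈ closedShiftSpan T φ) (f : L²) :
    f ∈ (closedMultiscaleSpan T D φ)ᗮ ↔
      ∀ j : ℤ, (fun θ => conj (F f θ) * (D ^ (-j)) (F φ) θ) =ᵐ[volume] 0 := by
  refine ⟨fun hf j => ?_, fun h => ?_⟩
  · have hint : Integrable fun θ => conj (F f θ) * (D ^ (-j)) (F φ) θ := by
      simpa only [RCLike.inner_apply'] using L2.integrable_inner (𝕜 := ℂ) (F f) ((D ^ (-j)) (F φ))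
    refine hint.ae_eq_zero_of_fourier_eq_zero (Continuous.ext_on (dense_intCast_mul_two_zpow j)
      (VectorFourier.fourierIntegral_continuous Real.continuous_fourierChar continuous_inner hint)
      continuous_const ?_)
    rintro _ ⟨k, m, rfl⟩
    rw [Pi.zero_apply, ← inner_generator hT hD hF]
    refine inner_eq_zero_symm.mp (hf _ (zpow_apply_mem_closedMultiscaleSpan _
      (zpow_apply_mem_closedShiftSpan k (zpow_neg_natCast_apply_mem_closedShiftSpan
        (translation_mul_dilation hT hD) href m self_mem_closedShiftSpan))))
  · have hW : closedMultiscaleSpan T D φ ≤ (ℂ ∙ f)ᗮ := by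
      refine closedMultiscaleSpan_le (isClosed_orthogonal _) fun j k => ?_
      have hjk := inner_generator hT hD hF (φ := φ) f j 0 k
      rw [add_zero, neg_zero, zpow_zero, ContinuousLinearEquiv.one_apply,
        Real.fourier_congr_ae (h j)] at hjk
      rw [mem_orthogonal_singleton_iff_inner_right, hjk, Real.fourier_real_eq]
      simp
    exact (mem_orthogonal _ f).mpr fun u hu =>
      inner_eq_zero_symm.mp ((mem_orthogonal_singleton_iff_inner_right).mp (hW hu))

lemma mem_orthogonal_closedMultiscaleSpan_iff_ae (href : D⁻¹ φ ∈ closedShiftSpan T φ) (f : L²) :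
    f ∈ (closedMultiscaleSpan T D φ)ᗮ ↔
      ∀ᵐ θ, F f θ = 0 ∨ ∀ j : ℤ, F φ (2 ^ (-j) * θ) = 0 := by
  have hΦ : ∀ᵐ θ, ∀ j : ℤ, (D ^ (-j)) (F φ) θ = Real.sqrt 2 ^ (-j) * F φ (2 ^ (-j) * θ) :=
    ae_all_iff.mpr fun j => dilation_zpow_apply ofReal_sqrt_two_ne_zero two_ne_zero hD (-j) (F φ)
  simp only [mem_orthogonal_closedMultiscaleSpan_iff hT hD hF href, Filter.EventuallyEq,
    Pi.zero_apply, ← ae_all_iff]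
  refine ⟨fun h => ?_, fun h => ?_⟩ <;> filter_upwards [h, hΦ] with θ h1 h2
  · refine or_iff_not_imp_left.mpr fun hf0 j => ?_
    have h1j := h1 j
    rw [h2 j, mul_eq_zero, mul_eq_zero, map_eq_zero] at h1j
    exact (h1j.resolve_left hf0).resolve_left (zpow_ne_zero _ ofReal_sqrt_two_ne_zero)
  · intro j
    rw [h2 j]
    rcases h1 with h1 | h1
    · rw [h1, map_zero, zero_mul]
    · rw [h1 j, mul_zero, mul_zero]

end Refinable

/-- Let `φ ∈ L²(ℝ)` be refinable and `V_j = D^j V₀`.  Then the closure of `⋃_j V_j` is all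
of `L²(ℝ)` if and only if `⋃_{j∈ℤ} 2^j · supp(φ̂) = ℝ` up to a null set, i.e. for a.e. `θ`
there is `j ∈ ℤ` with `φ̂(2^{-j}θ) ≠ 0`.  `F2` is the Fourier–Plancherel transform. -/
theorem stmt17
    (T D : Lp ℂ 2 (volume : Measure ℝ) ≃L[ℂ] Lp ℂ 2 (volume : Measure ℝ))
    (hT : ∀ f : Lp ℂ 2 (volume : Measure ℝ),
      ∀ᵐ x : ℝ, (T f : ℝ → ℂ) x = (f : ℝ → ℂ) (x - 1))
    (hD : ∀ f : Lp ℂ 2 (volume : Measure ℝ),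
      ∀ᵐ x : ℝ, (D f : ℝ → ℂ) x = (Real.sqrt 2 : ℂ) * (f : ℝ → ℂ) (2 * x))
    (F2 : Lp ℂ 2 (volume : Measure ℝ) ≃ₗᵢ[ℂ] Lp ℂ 2 (volume : Measure ℝ))
    (hF2 : ∀ (g : ℝ → ℂ), Integrable g → ∀ hg2 : MemLp g 2 (volume : Measure ℝ),
      (F2 (hg2.toLp g) : ℝ → ℂ) =ᵐ[volume] fun y : ℝ =>
        ∫ x : ℝ, g x * Complex.exp (-2 * (Real.pi : ℂ) * Complex.I * (x : ℂ) * (y : ℂ)))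
    (φ : Lp ℂ 2 (volume : Measure ℝ))
    (href : D⁻¹ φ ∈
      (Submodule.span ℂ (Set.range fun k : ℤ => (T ^ k) φ)).topologicalClosure) :
    (⨆ j : ℤ,
        Submodule.map
          (((D ^ j : Lp ℂ 2 (volume : Measure ℝ) ≃L[ℂ] Lp ℂ 2 (volume : Measure ℝ)) :
            Lp ℂ 2 (volume : Measure ℝ) →L[ℂ] Lp ℂ 2 (volume : Measure ℝ)) :
            Lp ℂ 2 (volume : Measure ℝ) →ₗ[ℂ] Lp ℂ 2 (volume : Measure ℝ))
          (Submodule.span ℂ (Set.range fun k : ℤ => (T ^ k) φ)).topologicalClosure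
        ).topologicalClosure = ⊤ ↔
      ∀ᵐ θ : ℝ, ∃ j : ℤ, (F2 φ : ℝ → ℂ) ((2 : ℝ) ^ (-j) * θ) ≠ 0 := by
  have hF : ∀ g : ℝ → ℂ, Integrable g → ∀ hg : MemLp g 2, F2 (hg.toLp g) =ᵐ[volume] 𝓕 g :=
    fun g hg hg2 =>
      (hF2 g hg hg2).trans (ae_of_all _ fun y => (fourier_eq_integral_mul_exp g y).symm)
  have hZ : MeasurableSet {θ : ℝ | ∀ j : ℤ, F2 φ (2 ^ (-j) * θ) = 0} := by
    simp only [ofPred_forall]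
    exact MeasurableSet.iInter fun j => measurableSet_eq_fun
      ((Lp.stronglyMeasurable (F2 φ)).measurable.comp (measurable_const_mul _)) measurable_const
  have : CompleteSpace (closedMultiscaleSpan T D φ) :=
    (isClosed_topologicalClosure _).completeSpace_coe
  change closedMultiscaleSpan T D φ = ⊤ ↔ _
  have hF2_forall (P : L² → Prop) : (∀ f, P (F2 f) → f = 0) ↔ ∀ g, P g → g = 0 := by
    rw [F2.surjective.forall (p := fun g => P g → g = 0)]
    simp only [LinearIsometryEquiv.map_eq_zero_iff]
  rw [← orthogonal_eq_bot_iff, Submodule.eq_bot_iff]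
  simp_rw [mem_orthogonal_closedMultiscaleSpan_iff_ae hT hD hF href]
  refine (hF2_forall fun g => ∀ᵐ θ, g θ = 0 ∨ θ ∈ {θ : ℝ | ∀ j : ℤ, F2 φ (2 ^ (-j) * θ) = 0}).trans
    ((Lp.forall_eq_zero_of_ae_eq_zero_off_iff two_ne_zero ENNReal.ofNat_ne_top hZ).trans ?_)
  simp [ae_iff]
end
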